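/- arXiv:1508.07540 — 4 statements merged into one kernel-verified Lean document; each statement's English description precedes it below -/
import Mathlib

section
/- Let n ≥ m ≥ 1 be integers and let P_{n,m} = {σ ⊆ [n] : σ contains no m consecutive integers}. Then the Stanley depth of the poset P_{n,m} equals n + 1 − ⌊(n+1)/(m+1)⌋ − ⌈(n+1)/(m+1)⌉; i.e., there is a partition of P_{n,m} into intervals [F_i,G_i] with every |G_i| ≥ n + 1 − ⌊(n+1)/(m+1)⌋ − ⌈(n+1)/(m+1)⌉, and no partition does better. -/
/-!
Lower bound: partition the consecutive-free subsets of an interval `[a, b)` recursively. For such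
a set `Z`, let `g` be the last element of `[a, a + m)` missing from `Z` and `h` the first element
after `g` missing from `Z`; then `a + m ≤ h ≤ g + m`. The sets with given `(g, h)` are those
containing every integer strictly between `g` and `h`, avoiding `g` and `h`, and consecutive-free
above `h`, the rest of `[a, h)` being arbitrary. So a partition for `[h + 1, b)` lifts to this class
with tops larger by `h - a - 1`, which suffices because
`depthBound m (b - a) ≤ h - a - 1 + depthBound m (b - h - 1)`.

Upper bound: `maximalPathSet n m` is a maximal consecutive-free subset of `[1, n]` of the required
size, and in any partition it is the top of the interval containing it.
-/

/-- `σ` contains `m` consecutive integers, i.e. there is `i` with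
`{i, i+1, …, i+m-1} ⊆ σ`. -/
def HasConsec (m : ℕ) (σ : Finset ℕ) : Prop :=
  ∃ i : ℕ, ∀ l < m, i + l ∈ σ

/-- The Herzog–Vladoiu–Zheng characteristic poset `P_{n,m}` of `S/I_{n,m}`:
the subsets of `[n] = {1,…,n}` containing no `m` consecutive integers. -/
def pathPoset (n m : ℕ) : Set (Finset ℕ) :=
  {σ | σ ⊆ Finset.Icc 1 n ∧ ¬ HasConsec m σ}

/-- `Pp` is a partition of the family `P` into intervals `[F,G] = {X | F ⊆ X ⊆ G}`:
the intervals are pairwise disjoint and their union is `P`. -/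
def IsIntervalPartition (P : Set (Finset ℕ)) (Pp : Finset (Finset ℕ × Finset ℕ)) : Prop :=
  (∀ p ∈ Pp, p.1 ⊆ p.2) ∧
  (∀ p ∈ Pp, ∀ q ∈ Pp, p ≠ q →
    ∀ X : Finset ℕ, ¬((p.1 ⊆ X ∧ X ⊆ p.2) ∧ (q.1 ⊆ X ∧ X ⊆ q.2))) ∧
  (∀ X : Finset ℕ, X ∈ P ↔ ∃ p ∈ Pp, p.1 ⊆ X ∧ X ⊆ p.2)

open Finset

namespace IsIntervalPartition

variable {P Q : Set (Finset ℕ)} {Pp : Finset (Finset ℕ × Finset ℕ)}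

theorem snd_mem (h : IsIntervalPartition P Pp) {p : Finset ℕ × Finset ℕ} (hp : p ∈ Pp) :
    p.2 ∈ P :=
  (h.2.2 p.2).2 ⟨p, hp, h.1 p hp, Subset.rfl⟩

theorem exists_snd_eq_of_maximal (h : IsIntervalPartition P Pp) {σ : Finset ℕ}
    (hσ : Maximal (· ∈ P) σ) : ∃ p ∈ Pp, p.2 = σ := by
  obtain ⟨p, hp, -, hσp⟩ := (h.2.2 σ).1 hσ.1
  exact ⟨p, hp, (hσ.2 (h.snd_mem hp) hσp).antisymm hσp⟩

theorem image_union (h : IsIntervalPartition Q Pp) {K W : Finset ℕ}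
    (hQW : ∀ X ∈ Q, Disjoint X W) (hKW : K ⊆ W) :
    IsIntervalPartition {Z | K ⊆ Z ∧ Z \ W ∈ Q} (Pp.image fun p => (p.1 ∪ K, p.2 ∪ W)) := by
  have key : ∀ p ∈ Pp, ∀ Z : Finset ℕ, (p.1 ∪ K ⊆ Z ∧ Z ⊆ p.2 ∪ W) ↔
      K ⊆ Z ∧ p.1 ⊆ Z \ W ∧ Z \ W ⊆ p.2 := by
    intro p hp Z
    have hp1W : Disjoint p.1 W := (hQW _ (h.snd_mem hp)).mono_left (h.1 p hp)
    have hsdiff : Z \ W ⊆ p.2 ↔ Z ⊆ p.2 ∪ W := sdiff_le_iff'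
    rw [union_subset_iff, subset_sdiff, hsdiff]
    tauto
  refine ⟨?_, ?_, fun Z => ?_⟩
  · simp only [mem_image]
    rintro _ ⟨p, hp, rfl⟩
    exact union_subset_union (h.1 p hp) hKW
  · simp only [mem_image]
    rintro _ ⟨p, hp, rfl⟩ _ ⟨q, hq, rfl⟩ hpq Z ⟨hZp, hZq⟩
    rw [key p hp] at hZp
    rw [key q hq] at hZq
    exact h.2.1 p hp q hq (fun hpq' => hpq (hpq' ▸ rfl)) (Z \ W) ⟨hZp.2, hZq.2⟩
  · simp only [Set.mem_ofPred_eq, mem_image, exists_exists_and_eq_and]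
    constructor
    · rintro ⟨hKZ, hZQ⟩
      obtain ⟨p, hp, hZp⟩ := (h.2.2 _).1 hZQ
      exact ⟨p, hp, (key p hp Z).2 ⟨hKZ, hZp⟩⟩
    · rintro ⟨p, hp, hZp⟩
      obtain ⟨hKZ, hZp⟩ := (key p hp Z).1 hZp
      exact ⟨hKZ, (h.2.2 _).2 ⟨p, hp, hZp⟩⟩

end IsIntervalPartition

theorem isIntervalPartition_powerset (S : Finset ℕ) :
    IsIntervalPartition {X | X ⊆ S} {(∅, S)} := by
  exact ⟨by simp, by simp, fun X => by simp⟩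

theorem isIntervalPartition_biUnion {ι : Type*} [DecidableEq ι] {P : Set (Finset ℕ)}
    {s : Finset ι} {C : ι → Set (Finset ℕ)} {Pp : ι → Finset (Finset ℕ × Finset ℕ)}
    (hPp : ∀ i ∈ s, IsIntervalPartition (C i) (Pp i))
    (hdisj : (s : Set ι).PairwiseDisjoint C) (hcover : P = ⋃ i ∈ s, C i) :
    IsIntervalPartition P (s.biUnion Pp) := by
  subst hcover
  refine ⟨?_, ?_, fun X => ?_⟩
  · simp only [mem_biUnion]
    rintro p ⟨i, hi, hp⟩
    exact (hPp i hi).1 p hp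
  · simp only [mem_biUnion]
    rintro p ⟨i, hi, hp⟩ q ⟨j, hj, hq⟩ hpq X ⟨hXp, hXq⟩
    obtain rfl : i = j := by
      by_contra hij
      exact Set.disjoint_left.1 (hdisj hi hj hij) (((hPp i hi).2.2 X).2 ⟨p, hp, hXp⟩)
        (((hPp j hj).2.2 X).2 ⟨q, hq, hXq⟩)
    exact (hPp i hi).2.1 p hp q hq hpq X ⟨hXp, hXq⟩
  · simp only [Set.mem_iUnion, mem_biUnion, exists_prop]
    constructor
    · rintro ⟨i, hi, hX⟩
      obtain ⟨p, hp, hXp⟩ := ((hPp i hi).2.2 X).1 hX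
      exact ⟨p, ⟨i, hi, hp⟩, hXp⟩
    · rintro ⟨p, ⟨i, hi, hp⟩, hXp⟩
      exact ⟨i, hi, ((hPp i hi).2.2 X).2 ⟨p, hp, hXp⟩⟩

theorem HasConsec.mono {m : ℕ} {σ τ : Finset ℕ} (h : HasConsec m σ) (hστ : σ ⊆ τ) :
    HasConsec m τ :=
  let ⟨i, hi⟩ := h
  ⟨i, fun l hl => hστ (hi l hl)⟩

theorem HasConsec.le_card {m : ℕ} {σ : Finset ℕ} (h : HasConsec m σ) : m ≤ #σ := by
  obtain ⟨i, hi⟩ := h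
  have hsub : Ico i (i + m) ⊆ σ := fun x hx => by
    rw [mem_Ico] at hx
    simpa [show i + (x - i) = x by omega] using hi (x - i) (by omega)
  simpa using card_le_card hsub

def consecFree (m : ℕ) (S : Finset ℕ) : Set (Finset ℕ) :=
  {σ | σ ⊆ S ∧ ¬ HasConsec m σ}

theorem consecFree_eq_of_card_lt {m : ℕ} {S : Finset ℕ} (hS : #S < m) :
    consecFree m S = {X | X ⊆ S} := by
  ext X
  exact ⟨And.left, fun hX => ⟨hX, fun hc => (hc.le_card.trans (card_le_card hX)).not_gt hS⟩⟩

-- `(k + 1) / (m + 1)` is `⌊(k + 1)/(m + 1)⌋` and `(k + m + 1) / (m + 1)` is `⌈(k + 1)/(m + 1)⌉`.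
def depthBound (m k : ℕ) : ℕ :=
  k + 1 - (k + 1) / (m + 1) - (k + m + 1) / (m + 1)

theorem ceil_eq_div_add_one (m k : ℕ) : (k + m + 1) / (m + 1) = k / (m + 1) + 1 :=
  Nat.add_div_right k m.succ_pos

theorem floor_add_ceil_le {m : ℕ} (hm : 1 ≤ m) (k : ℕ) :
    (k + 1) / (m + 1) + (k + m + 1) / (m + 1) ≤ k + 1 := by
  have h1 : (k + 1) / (m + 1) ≤ (k + 1) / 2 := Nat.div_le_div_left (by omega) two_pos
  have h2 : k / (m + 1) ≤ k / 2 := Nat.div_le_div_left (by omega) two_pos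
  rw [ceil_eq_div_add_one]
  generalize (k + 1) / (m + 1) = a at *
  generalize k / (m + 1) = b at *
  omega

theorem depthBound_le (m k : ℕ) : depthBound m k ≤ k := by
  unfold depthBound
  rw [ceil_eq_div_add_one]
  generalize (k + 1) / (m + 1) = a
  generalize k / (m + 1) = b
  omega

theorem depthBound_add_two_le {m : ℕ} (hm : 1 ≤ m) {k s : ℕ} (hs : m + 1 ≤ s) (hsk : s ≤ k + 1) :
    depthBound m k + 2 ≤ s + depthBound m (k - s) := by
  have hk := floor_add_ceil_le hm k
  have hks := floor_add_ceil_le hm (k - s)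
  unfold depthBound
  rcases hsk.lt_or_eq with hsk | rfl
  · have h1 : (k - s + 1) / (m + 1) + 1 ≤ (k + 1) / (m + 1) := by
      rw [← Nat.add_div_right _ m.succ_pos]
      exact Nat.div_le_div_right (by omega)
    have h2 : (k - s + m + 1) / (m + 1) + 1 ≤ (k + m + 1) / (m + 1) := by
      rw [← Nat.add_div_right _ m.succ_pos]
      exact Nat.div_le_div_right (by omega)
    generalize (k + 1) / (m + 1) = a at *
    generalize (k + m + 1) / (m + 1) = b at *
    generalize (k - s + 1) / (m + 1) = c at *
    generalize (k - s + m + 1) / (m + 1) = d at *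
    omega
  · have h1 : 1 ≤ (k + 1) / (m + 1) := (Nat.one_le_div_iff m.succ_pos).2 hs
    have h2 : 1 ≤ (k + m + 1) / (m + 1) := (Nat.one_le_div_iff m.succ_pos).2 (by omega)
    generalize (k + 1) / (m + 1) = a at *
    generalize (k + m + 1) / (m + 1) = b at *
    omega

def runClass (m a b g h : ℕ) : Set (Finset ℕ) :=
  {Z | Ico (g + 1) h ⊆ Z ∧ Z \ (Ico a h).erase g ∈ consecFree m (Ico (h + 1) b)}

section runClass

variable {m a b g h : ℕ} {Z : Finset ℕ}

theorem notMem_of_mem_runClass (hgh : g < h) (hZ : Z ∈ runClass m a b g h) :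
    g ∉ Z ∧ h ∉ Z := by
  have hZW := hZ.2.1
  constructor
  · intro hg
    have := mem_Ico.1 (hZW (mem_sdiff.2 ⟨hg, notMem_erase g _⟩))
    omega
  · intro hh
    have := mem_Ico.1 (hZW (mem_sdiff.2 ⟨hh, fun hW => by simp at hW⟩))
    omega

theorem runClass_subset (hg : g < a + m) (hh : a + m ≤ h) (hhg : h ≤ g + m) (hhb : h ≤ b) :
    runClass m a b g h ⊆ consecFree m (Ico a b) := by
  intro Z hZ
  obtain ⟨hgZ, hhZ⟩ := notMem_of_mem_runClass (by omega) hZ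
  have hZab : Z ⊆ Ico a b := by
    intro z hz
    by_cases hzW : z ∈ (Ico a h).erase g
    · have := mem_Ico.1 (mem_erase.1 hzW).2
      exact mem_Ico.2 (by omega)
    · have := mem_Ico.1 (hZ.2.1 (mem_sdiff.2 ⟨hz, hzW⟩))
      exact mem_Ico.2 (by omega)
  refine ⟨hZab, ?_⟩
  rintro ⟨i, hi⟩
  have hai : a ≤ i := (mem_Ico.1 (hZab (by simpa using hi 0 (by omega)))).1
  -- a run of length `m` starting at `i` would have to contain `g` or `h`, or lie above `h`
  rcases le_or_gt i g with hig | hgi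
  · exact hgZ (by simpa [show i + (g - i) = g by omega] using hi (g - i) (by omega))
  rcases le_or_gt i h with hih | hhi
  · exact hhZ (by simpa [show i + (h - i) = h by omega] using hi (h - i) (by omega))
  · exact hZ.2.2 ⟨i, fun l hl => mem_sdiff.2 ⟨hi l hl, fun hW => by simp at hW; omega⟩⟩

theorem eq_of_mem_runClass {c g' h' : ℕ} (hg : g < c) (hg' : g' < c) (hh : c ≤ h) (hh' : c ≤ h')
    (hZ : Z ∈ runClass m a b g h) (hZ' : Z ∈ runClass m a b g' h') : g = g' ∧ h = h' := by
  obtain ⟨hgZ, hhZ⟩ := notMem_of_mem_runClass (by omega) hZ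
  obtain ⟨hg'Z, hh'Z⟩ := notMem_of_mem_runClass (by omega) hZ'
  have hgg' : g = g' := by
    by_contra hne
    rcases Nat.lt_or_gt_of_ne hne with hlt | hlt
    · exact hg'Z (hZ.1 (mem_Ico.2 ⟨hlt, by omega⟩))
    · exact hgZ (hZ'.1 (mem_Ico.2 ⟨hlt, by omega⟩))
  subst hgg'
  refine ⟨rfl, ?_⟩
  by_contra hne
  rcases Nat.lt_or_gt_of_ne hne with hlt | hlt
  · exact hhZ (hZ'.1 (mem_Ico.2 ⟨by omega, hlt⟩))
  · exact hh'Z (hZ.1 (mem_Ico.2 ⟨by omega, hlt⟩))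

theorem exists_mem_runClass (hab : a + m ≤ b) (hZ : Z ∈ consecFree m (Ico a b)) :
    ∃ g h, (a ≤ g ∧ g < a + m) ∧ (a + m ≤ h ∧ h ≤ b) ∧ h ≤ g + m ∧ Z ∈ runClass m a b g h := by
  obtain ⟨hZab, hZc⟩ := hZ
  have hgaps : ({x ∈ Ico a (a + m) | x ∉ Z}).Nonempty := by
    rw [filter_nonempty_iff]
    by_contra! hall
    exact hZc ⟨a, fun l hl => hall _ (mem_Ico.2 ⟨by omega, by omega⟩)⟩
  obtain ⟨g, hg, hgmax⟩ := exists_max_image _ id hgaps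
  simp only [mem_filter, mem_Ico, id] at hg hgmax
  have hbZ : b ∉ Z := fun hb => by simpa using hZab hb
  obtain ⟨h, hh, hhmin⟩ := exists_min_image ({x ∈ Ioc g b | x ∉ Z}) id
    (filter_nonempty_iff.2 ⟨b, mem_Ioc.2 ⟨by omega, le_rfl⟩, hbZ⟩)
  simp only [mem_filter, mem_Ioc, id] at hh hhmin
  have hrun : ∀ x, g < x → x < h → x ∈ Z := fun x hgx hxh => by
    by_contra hx
    exact absurd (hhmin x ⟨⟨hgx, by omega⟩, hx⟩) (by omega)
  have hah : a + m ≤ h := by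
    by_contra hlt
    exact absurd (hgmax h ⟨⟨by omega, by omega⟩, hh.2⟩) (by omega)
  have hhg : h ≤ g + m := by
    by_contra hlt
    exact hZc ⟨g + 1, fun l hl => hrun _ (by omega) (by omega)⟩
  refine ⟨g, h, hg.1, ⟨hah, hh.1.2⟩, hhg, fun x hx => hrun x (by simp at hx; omega)
    (by simp at hx; omega), fun z hz => ?_, fun hc => hZc (hc.mono sdiff_subset)⟩
  obtain ⟨hzZ, hzW⟩ := mem_sdiff.1 hz
  have hzg : z ≠ g := ne_of_mem_of_not_mem hzZ hg.2
  have hzh : z ≠ h := ne_of_mem_of_not_mem hzZ hh.2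
  have := mem_Ico.1 (hZab hzZ)
  simp only [mem_erase, mem_Ico, not_and] at hzW
  exact mem_Ico.2 ⟨by omega, by omega⟩

theorem disjoint_of_mem_consecFree_Ico {X : Finset ℕ} (hX : X ∈ consecFree m (Ico (h + 1) b)) :
    Disjoint X ((Ico a h).erase g) :=
  disjoint_left.2 fun z hz hzW => by
    have := mem_Ico.1 (hX.1 hz)
    simp only [mem_erase, mem_Ico] at hzW
    omega

end runClass

section lowerBound

variable {m : ℕ}

theorem exists_isIntervalPartition_consecFree_Ico_of_le (hm : 1 ≤ m) {a b : ℕ} (hab : a + m ≤ b)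
    (ih : ∀ c, a < c → ∃ Pp : Finset (Finset ℕ × Finset ℕ),
      IsIntervalPartition (consecFree m (Ico c b)) Pp ∧ ∀ p ∈ Pp, depthBound m (b - c) ≤ #p.2) :
    ∃ Pp : Finset (Finset ℕ × Finset ℕ),
      IsIntervalPartition (consecFree m (Ico a b)) Pp ∧ ∀ p ∈ Pp, depthBound m (b - a) ≤ #p.2 := by
  choose! Q hQ hQcard using ih
  set s := {x ∈ Ico a (a + m) ×ˢ Icc (a + m) b | x.2 ≤ x.1 + m}
  have mem_s : ∀ x, x ∈ s ↔ (a ≤ x.1 ∧ x.1 < a + m) ∧ (a + m ≤ x.2 ∧ x.2 ≤ b) ∧ x.2 ≤ x.1 + m :=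
    by simp [s, and_assoc]
  let W : ℕ × ℕ → Finset ℕ := fun x => (Ico a x.2).erase x.1
  refine ⟨s.biUnion fun x => (Q (x.2 + 1)).image fun p => (p.1 ∪ Ico (x.1 + 1) x.2, p.2 ∪ W x),
    isIntervalPartition_biUnion (C := fun x => runClass m a b x.1 x.2) ?_ ?_ ?_, ?_⟩
  · intro x hx
    rw [mem_s] at hx
    refine (hQ (x.2 + 1) (by omega)).image_union (fun _ => disjoint_of_mem_consecFree_Ico)
      fun y hy => ?_
    simp only [mem_erase, mem_Ico] at hy ⊢
    omega
  · intro x hx y hy hxy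
    rw [mem_coe, mem_s] at hx hy
    refine Set.disjoint_left.2 fun Z hZx hZy => hxy ?_
    obtain ⟨h1, h2⟩ := eq_of_mem_runClass (c := a + m) (by omega) (by omega) (by omega) (by omega)
      hZx hZy
    exact Prod.ext h1 h2
  · ext Z
    simp only [Set.mem_iUnion, mem_s, exists_prop, Prod.exists]
    constructor
    · intro hZ
      obtain ⟨g, h, hg, hh, hhg, hZ⟩ := exists_mem_runClass (by omega) hZ
      exact ⟨g, h, ⟨hg, hh, hhg⟩, hZ⟩
    · rintro ⟨g, h, ⟨hg, hh, hhg⟩, hZ⟩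
      exact runClass_subset hg.2 hh.1 hhg hh.2 hZ
  · simp only [mem_biUnion, mem_image]
    rintro _ ⟨x, hx, p, hp, rfl⟩
    rw [mem_s] at hx
    have hpW : Disjoint p.2 (W x) :=
      disjoint_of_mem_consecFree_Ico ((hQ (x.2 + 1) (by omega)).snd_mem hp)
    have hWcard : #(W x) = x.2 - a - 1 := by
      rw [card_erase_of_mem (mem_Ico.2 (by omega)), Nat.card_Ico]
    have hbound := depthBound_add_two_le hm (k := b - a) (s := x.2 - a + 1) (by omega) (by omega)
    rw [show b - a - (x.2 - a + 1) = b - (x.2 + 1) by omega] at hbound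
    have := hQcard (x.2 + 1) (by omega) p hp
    rw [card_union_of_disjoint hpW]
    omega

theorem exists_isIntervalPartition_consecFree_Ico (hm : 1 ≤ m) (a b : ℕ) :
    ∃ Pp : Finset (Finset ℕ × Finset ℕ),
      IsIntervalPartition (consecFree m (Ico a b)) Pp ∧ ∀ p ∈ Pp, depthBound m (b - a) ≤ #p.2 := by
  rcases lt_or_ge (b - a) m with hk | hk
  · refine ⟨{(∅, Ico a b)}, ?_, by simpa using depthBound_le m (b - a)⟩
    rw [consecFree_eq_of_card_lt (by simpa using hk)]
    exact isIntervalPartition_powerset _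
  · exact exists_isIntervalPartition_consecFree_Ico_of_le hm (by omega)
      fun c _ => exists_isIntervalPartition_consecFree_Ico hm c b
termination_by b - a

end lowerBound

/-- `[1, n]` minus the multiples of `m + 1` and minus the first element of every block
`[(m+1)q + 1, (m+1)q + m]` contained in `[1, n]`. -/
def maximalPathSet (n m : ℕ) : Finset ℕ :=
  {x ∈ Icc 1 n | ¬ m + 1 ∣ x ∧ ¬ (m + 1 ∣ x + m ∧ x + m ≤ n + 1)}

section upperBound

variable {n m : ℕ}

theorem mem_maximalPathSet_of_lt_of_lt {x : ℕ} (q : ℕ) (hqx : (m + 1) * q + 1 < x)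
    (hxq : x < (m + 1) * q + (m + 1)) (hxn : x ≤ n) : x ∈ maximalPathSet n m := by
  refine mem_filter.2 ⟨mem_Icc.2 ⟨by omega, hxn⟩,
    Nat.not_dvd_of_lt_of_lt_mul_succ (k := q) (by omega) (by rwa [mul_add_one]), fun h => ?_⟩
  exact Nat.not_dvd_of_lt_of_lt_mul_succ (k := q + 1) (by rw [mul_add_one]; omega)
    (by rw [mul_add_one, mul_add_one]; omega) h.1

theorem not_hasConsec_maximalPathSet (hm : 1 ≤ m) : ¬ HasConsec m (maximalPathSet n m) := by
  rintro ⟨i, hi⟩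
  have hmem := fun l hl => mem_filter.1 (hi l hl)
  set q := (i + m) / (m + 1)
  have hq : (m + 1) * q ≤ i + m := Nat.mul_div_le _ _
  have hq' : i + m < (m + 1) * q + (m + 1) := by
    rw [← mul_add_one]
    exact Nat.lt_mul_div_succ _ m.succ_pos
  rcases hq.lt_or_eq with hlt | heq
  · have := (hmem ((m + 1) * q - i) (by omega)).2.1
    rw [show i + ((m + 1) * q - i) = (m + 1) * q by omega] at this
    exact this (dvd_mul_right _ _)
  · have hlast := mem_Icc.1 (hmem (m - 1) (by omega)).1
    exact (hmem 0 (by omega)).2.2 ⟨heq ▸ dvd_mul_right _ _, by omega⟩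

theorem hasConsec_insert_maximalPathSet (hm : 1 ≤ m) {x : ℕ} (hx : x ∈ Icc 1 n)
    (hxσ : x ∉ maximalPathSet n m) : HasConsec m (insert x (maximalPathSet n m)) := by
  simp only [maximalPathSet, mem_filter, hx, true_and, not_and_or, not_or, not_not] at hxσ
  rw [mem_Icc] at hx
  rcases hxσ with hdvd | ⟨hdvd, hxn⟩
  · -- `x` ends the block `[x - m + 1, x]`, whose other elements lie in the set
    obtain ⟨_ | q, hq⟩ := hdvd
    · omega
    rw [mul_add_one] at hq
    refine ⟨(m + 1) * q + 2, fun l hl => ?_⟩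
    rcases (show l ≤ m - 1 by omega).lt_or_eq with hlt | rfl
    · exact mem_insert_of_mem (mem_maximalPathSet_of_lt_of_lt q (by omega) (by omega) (by omega))
    · exact mem_insert.2 (Or.inl (by omega))
  · -- `x` starts the block `[x, x + m - 1]`, whose other elements lie in the set
    obtain ⟨_ | q, hq⟩ := hdvd
    · omega
    rw [mul_add_one] at hq
    refine ⟨x, fun l hl => ?_⟩
    rcases Nat.eq_zero_or_pos l with rfl | hl0
    · exact mem_insert_self _ _
    · exact mem_insert_of_mem (mem_maximalPathSet_of_lt_of_lt q (by omega) (by omega) (by omega))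

theorem maximal_maximalPathSet (hm : 1 ≤ m) :
    Maximal (· ∈ pathPoset n m) (maximalPathSet n m) := by
  refine ⟨⟨filter_subset _ _, not_hasConsec_maximalPathSet hm⟩, fun τ hτ hστ x hx => ?_⟩
  by_contra hxσ
  exact hτ.2 ((hasConsec_insert_maximalPathSet hm (hτ.1 hx) hxσ).mono (insert_subset hx hστ))

theorem card_maximalPathSet (hm : 1 ≤ m) :
    #(maximalPathSet n m) + n / (m + 1) + (n + 1) / (m + 1) = n := by
  have hmult : #{x ∈ Icc 1 n | m + 1 ∣ x} = n / (m + 1) := Nat.Ioc_filter_dvd_card_eq_div n _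
  -- `x ↦ x + m` maps the block starts onto the multiples of `m + 1` in `[1, n + 1]`
  have hstarts : #{x ∈ Icc 1 n | m + 1 ∣ x + m ∧ x + m ≤ n + 1} = (n + 1) / (m + 1) := by
    rw [← Nat.Ioc_filter_dvd_card_eq_div (n + 1) (m + 1)]
    refine card_nbij' (· + m) (· - m) ?_ ?_ (fun x _ => by simp) ?_
    · intro x hx
      simp only [coe_filter, Set.mem_ofPred_eq, mem_Icc, mem_Ioc] at hx ⊢
      exact ⟨⟨by omega, hx.2.2⟩, hx.2.1⟩
    · intro y hy
      simp only [coe_filter, Set.mem_ofPred_eq, mem_Icc, mem_Ioc] at hy ⊢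
      have := Nat.le_of_dvd hy.1.1 hy.2
      rw [Nat.sub_add_cancel (by omega)]
      exact ⟨⟨by omega, by omega⟩, hy.2, by omega⟩
    · intro y hy
      simp only [coe_filter, Set.mem_ofPred_eq, mem_Ioc] at hy
      have := Nat.le_of_dvd hy.1.1 hy.2
      show y - m + m = y
      omega
  have hsplit := card_filter_add_card_filter_not (s := Icc 1 n) (m + 1 ∣ ·)
  have hsplit' := card_filter_add_card_filter_not (s := {x ∈ Icc 1 n | ¬ m + 1 ∣ x})
    (fun x => m + 1 ∣ x + m ∧ x + m ≤ n + 1)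
  rw [filter_filter, filter_filter] at hsplit'
  have hstarts' : {x ∈ Icc 1 n | ¬ m + 1 ∣ x ∧ (m + 1 ∣ x + m ∧ x + m ≤ n + 1)} =
      {x ∈ Icc 1 n | m + 1 ∣ x + m ∧ x + m ≤ n + 1} := by
    refine filter_congr fun x _ => and_iff_right_of_imp fun h hx => ?_
    exact Nat.not_dvd_of_pos_of_lt hm m.lt_succ_self ((Nat.dvd_add_right hx).1 h.1)
  rw [hstarts', hstarts] at hsplit'
  simp only [Nat.card_Icc, add_tsub_cancel_right] at hsplit
  unfold maximalPathSet
  omega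

end upperBound

theorem stmt_2_general (n m : ℕ) (hm : 1 ≤ m) :
    IsGreatest {d : ℕ | ∃ Pp : Finset (Finset ℕ × Finset ℕ),
        IsIntervalPartition (pathPoset n m) Pp ∧ ∀ p ∈ Pp, d ≤ p.2.card}
      (n + 1 - (n + 1) / (m + 1) - (n + m + 1) / (m + 1)) := by
  refine ⟨?_, ?_⟩
  · obtain ⟨Pp, hPp, hcard⟩ := exists_isIntervalPartition_consecFree_Ico hm 1 (n + 1)
    rw [Ico_add_one_right_eq_Icc] at hPp
    exact ⟨Pp, hPp, by simpa [depthBound] using hcard⟩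
  · rintro d ⟨Pp, hPp, hd⟩
    obtain ⟨p, hp, hpσ⟩ := hPp.exists_snd_eq_of_maximal (maximal_maximalPathSet hm)
    have hdσ := hpσ ▸ hd p hp
    have hσ := card_maximalPathSet (n := n) hm
    rw [ceil_eq_div_add_one]
    omega

/-- The Stanley depth of the poset `P_{n,m}` equals
`n + 1 − ⌊(n+1)/(m+1)⌋ − ⌈(n+1)/(m+1)⌉` (here `(n+1)/(m+1)` is the floor and
`(n+m+1)/(m+1)` the ceiling of `(n+1)/(m+1)`): there is an interval partition all
of whose upper sets `G` satisfy `|G| ≥` this value, and no partition does better. -/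
theorem stmt_2 (n m : ℕ) (hm : 1 ≤ m) (hn : m ≤ n) :
    IsGreatest {d : ℕ | ∃ Pp : Finset (Finset ℕ × Finset ℕ),
        IsIntervalPartition (pathPoset n m) Pp ∧ ∀ p ∈ Pp, d ≤ p.2.card}
      (n + 1 - (n + 1) / (m + 1) - (n + m + 1) / (m + 1)) :=
  stmt_2_general n m hm
end

section
/- Let n ≥ m ≥ 1 be integers and let P_{n,m} = {σ ⊆ [n] : σ contains no m consecutive integers}. Then every partition of P_{n,m} into intervals [F_i,G_i] contains some interval with |G_i| ≤ n + 1 − ⌊(n+1)/(m+1)⌋ − ⌈(n+1)/(m+1)⌉; i.e., sdepth(P_{n,m}) ≤ n + 1 − ⌊(n+1)/(m+1)⌋ − ⌈(n+1)/(m+1)⌉. -/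
open Finset

lemma IsIntervalPartition.snd_mem_s3 {P : Set (Finset ℕ)} {Pp : Finset (Finset ℕ × Finset ℕ)}
    (h : IsIntervalPartition P Pp) {p : Finset ℕ × Finset ℕ} (hp : p ∈ Pp) : p.2 ∈ P :=
  (h.2.2 p.2).mpr ⟨p, hp, h.1 p hp, subset_rfl⟩

lemma mul_add_self_le_of_lt_div {a b k : ℕ} (hk : k < a / b) : k * b + b ≤ a := by
  have hb : 0 < b := Nat.pos_of_ne_zero (by rintro rfl; simp at hk)
  simpa [add_one_mul] using (Nat.le_div_iff_mul_le hb).mp hk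

lemma notMem_of_not_hasConsec {m : ℕ} {G : Finset ℕ} (hG : ¬ HasConsec m G) {a b : ℕ}
    (hwin : ∀ l < m, a + l = b ∨ a + l ∈ G) : b ∉ G :=
  fun hb => hG ⟨a, fun l hl => (hwin l hl).elim (· ▸ hb) id⟩

section

variable {n m : ℕ}

def blockingSet (n m : ℕ) : Finset ℕ :=
  (Icc 1 n).filter fun j => 2 ≤ j % (m + 1)

lemma mem_blockingSet {j : ℕ} : j ∈ blockingSet n m ↔ (1 ≤ j ∧ j ≤ n) ∧ 2 ≤ j % (m + 1) := by
  rw [blockingSet, mem_filter, mem_Icc]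

lemma not_hasConsec_blockingSet (hm : 1 ≤ m) : ¬ HasConsec m (blockingSet n m) := by
  rintro ⟨i, hi⟩
  by_cases hi_low : i % (m + 1) ≤ 1
  · have := (mem_blockingSet.mp (hi 0 hm)).2
    rw [add_zero] at this
    omega
  · -- the next multiple of `m + 1` lies in the window
    have hl : m + 1 - i % (m + 1) < m := by omega
    have hmul : i + (m + 1 - i % (m + 1)) = (i / (m + 1) + 1) * (m + 1) := by
      have := Nat.div_add_mod' i (m + 1)
      have := Nat.mod_lt i (by omega : 0 < m + 1)
      rw [add_mul, one_mul]
      omega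
    have := (mem_blockingSet.mp (hi _ hl)).2
    rw [hmul, Nat.mul_mod_left] at this
    omega

lemma blockingSet_mem_pathPoset (hm : 1 ≤ m) : blockingSet n m ∈ pathPoset n m :=
  ⟨filter_subset _ _, not_hasConsec_blockingSet hm⟩

section

variable {G : Finset ℕ} (hG : ¬ HasConsec m G) (hτ : blockingSet n m ⊆ G)
include hG hτ

lemma mul_add_self_notMem {k : ℕ} (hk : k * (m + 1) + (m + 1) ≤ n) :
    k * (m + 1) + (m + 1) ∉ G := by
  refine notMem_of_not_hasConsec hG (a := k * (m + 1) + 2) fun l hl => ?_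
  rcases Nat.lt_or_ge l (m - 1) with hl' | hl'
  · refine .inr (hτ (mem_blockingSet.mpr ⟨by omega, ?_⟩))
    rw [add_assoc, Nat.mul_add_mod_of_lt (by omega)]
    omega
  · exact .inl (by omega)

lemma mul_add_one_notMem {k : ℕ} (hk : k * (m + 1) + m ≤ n) : k * (m + 1) + 1 ∉ G := by
  refine notMem_of_not_hasConsec hG (a := k * (m + 1) + 1) fun l hl => ?_
  rcases Nat.eq_zero_or_pos l with rfl | hl0
  · exact .inl rfl
  · refine .inr (hτ (mem_blockingSet.mpr ⟨by omega, ?_⟩))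
    rw [add_assoc, Nat.mul_add_mod_of_lt (by omega)]
    omega

end

/-- With `M = m + 1`: the multiples `kM ∈ [n]`, and the `kM + 1` with `kM + m ≤ n`. -/
def holes (n m : ℕ) : Finset ℕ :=
  (range (n / (m + 1))).image (fun k => k * (m + 1) + (m + 1)) ∪
    (range ((n + 1) / (m + 1))).image (fun k => k * (m + 1) + 1)

lemma holes_subset_Icc (hm : 1 ≤ m) : holes n m ⊆ Icc 1 n := by
  intro j hj
  simp only [holes, mem_union, mem_image, mem_range, mem_Icc] at hj ⊢
  rcases hj with ⟨k, hk, rfl⟩ | ⟨k, hk, rfl⟩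
  · have := mul_add_self_le_of_lt_div hk
    omega
  · have := mul_add_self_le_of_lt_div hk
    omega

lemma card_holes (hm : 1 ≤ m) : #(holes n m) = n / (m + 1) + (n + 1) / (m + 1) := by
  rw [holes, card_union_of_disjoint, card_image_of_injective, card_image_of_injective,
    card_range, card_range]
  · exact fun a b h => by simpa using h
  · exact fun a b h => by simpa using h
  · simp only [disjoint_left, mem_image]
    rintro _ ⟨k, -, rfl⟩ ⟨k', -, h⟩
    have := congrArg (· % (m + 1)) h
    simp only [Nat.add_mod_right, Nat.mul_mod_left, Nat.mul_add_mod_of_lt (by omega : 1 < m + 1)]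
      at this
    omega

lemma disjoint_holes {G : Finset ℕ} (hG : ¬ HasConsec m G) (hτ : blockingSet n m ⊆ G) :
    Disjoint G (holes n m) := by
  rw [disjoint_right]
  simp only [holes, mem_union, mem_image, mem_range]
  rintro _ (⟨k, hk, rfl⟩ | ⟨k, hk, rfl⟩)
  · exact mul_add_self_notMem hG hτ (mul_add_self_le_of_lt_div hk)
  · have := mul_add_self_le_of_lt_div hk
    exact mul_add_one_notMem hG hτ (by omega)

lemma card_le_of_blockingSet_subset (hm : 1 ≤ m) {G : Finset ℕ}
    (hG : G ∈ pathPoset n m) (hτ : blockingSet n m ⊆ G) :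
    #G ≤ n - n / (m + 1) - (n + 1) / (m + 1) := by
  have hsub : G ⊆ Icc 1 n \ holes n m := subset_sdiff.mpr ⟨hG.1, disjoint_holes hG.2 hτ⟩
  have := card_le_card hsub
  rw [card_sdiff_of_subset (holes_subset_Icc hm), card_holes hm, Nat.card_Icc] at this
  omega

end

theorem stmt_3_general (n m : ℕ) (hm : 1 ≤ m)
    (Pp : Finset (Finset ℕ × Finset ℕ)) (hPart : IsIntervalPartition (pathPoset n m) Pp) :
    ∃ p ∈ Pp, p.2.card ≤ n + 1 - (n + 1) / (m + 1) - (n + m + 1) / (m + 1) := by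
  obtain ⟨p, hp, -, hτ⟩ := (hPart.2.2 _).mp (blockingSet_mem_pathPoset hm)
  refine ⟨p, hp, ?_⟩
  have hcard := card_le_of_blockingSet_subset hm (hPart.snd_mem_s3 hp) hτ
  have hdiv : (n + m + 1) / (m + 1) = n / (m + 1) + 1 := by
    rw [add_assoc, Nat.add_div_right _ (by omega)]
  omega

/-- Every interval partition of `P_{n,m}` contains an interval `[F,G]` with
`|G| ≤ n + 1 − ⌊(n+1)/(m+1)⌋ − ⌈(n+1)/(m+1)⌉`; i.e.
`sdepth(P_{n,m}) ≤ n + 1 − ⌊(n+1)/(m+1)⌋ − ⌈(n+1)/(m+1)⌉`. -/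
theorem stmt_3 (n m : ℕ) (hm : 1 ≤ m) (hn : m ≤ n)
    (Pp : Finset (Finset ℕ × Finset ℕ)) (hPart : IsIntervalPartition (pathPoset n m) Pp) :
    ∃ p ∈ Pp, p.2.card ≤ n + 1 - (n + 1) / (m + 1) - (n + m + 1) / (m + 1) :=
  stmt_3_general n m hm Pp hPart
end

section
/- Let n ≥ m ≥ 1 be integers, k = ⌊n/(m+1)⌋, and suppose n = (k+1)(m+1)−1 or n = (k+1)(m+1)−2. Set τ = ⋃_{j=0}^{k} {j(m+1)+1, j(m+1)+2, …, j(m+1)+m−1} ⊆ [n]. Then: (i) |τ| = (k+1)(m−1); (ii) τ contains no m consecutive integers; (iii) for every i ∈ [n] \ τ, the set τ ∪ {i} contains m consecutive integers; and (iv) |τ| = n + 1 − ⌊(n+1)/(m+1)⌋ − ⌈(n+1)/(m+1)⌉. -/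
open Finset

def block (m j : ℕ) : Finset ℕ := Icc (j * (m + 1) + 1) (j * (m + 1) + m - 1)

def blockUnion (m k : ℕ) : Finset ℕ := (range (k + 1)).biUnion (block m)

theorem exists_mul_add_eq (m x : ℕ) : ∃ q r, r ≤ m ∧ (m + 1) * q + r = x :=
  ⟨x / (m + 1), x % (m + 1), Nat.lt_succ_iff.1 (Nat.mod_lt x (Nat.succ_pos m)),
    Nat.div_add_mod x (m + 1)⟩

theorem mem_block_iff {m j x : ℕ} :
    x ∈ block m j ↔ x / (m + 1) = j ∧ 0 < x % (m + 1) ∧ x % (m + 1) < m := by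
  have hdm := Nat.div_add_mod x (m + 1)
  constructor
  · intro hx
    rw [block, mem_Icc] at hx
    obtain ⟨hq, hr⟩ := (Nat.div_mod_unique (Nat.succ_pos m)).2
      (⟨by grind, by omega⟩ : x - j * (m + 1) + (m + 1) * j = x ∧ x - j * (m + 1) < m + 1)
    rw [hq, hr]
    omega
  · rintro ⟨rfl, hr⟩
    rw [block, mem_Icc]
    grind

theorem card_block (m j : ℕ) : (block m j).card = m - 1 := by
  rw [block, Nat.card_Icc]
  omega

theorem mul_add_mem_blockUnion_iff {m k q r : ℕ} (hr : r ≤ m) :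
    (m + 1) * q + r ∈ blockUnion m k ↔ q ≤ k ∧ 0 < r ∧ r < m := by
  have hq : ((m + 1) * q + r) / (m + 1) = q := by
    rw [Nat.mul_add_div (Nat.succ_pos m), Nat.div_eq_of_lt (by omega), add_zero]
  have hrem : ((m + 1) * q + r) % (m + 1) = r := by
    rw [Nat.mul_add_mod, Nat.mod_eq_of_lt (by omega)]
  simp only [blockUnion, mem_biUnion, mem_range, mem_block_iff, hq, hrem]
  constructor
  · rintro ⟨j, hj, rfl, hr⟩
    exact ⟨by omega, hr⟩
  · rintro ⟨hqk, hr⟩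
    exact ⟨q, by omega, rfl, hr⟩

theorem card_blockUnion (m k : ℕ) : (blockUnion m k).card = (k + 1) * (m - 1) := by
  have hdisj : ((range (k + 1) : Finset ℕ) : Set ℕ).PairwiseDisjoint (block m) := by
    intro i _ j _ hij
    refine disjoint_left.2 fun x hi hj => hij ?_
    rw [← (mem_block_iff.1 hi).1, ← (mem_block_iff.1 hj).1]
  simp [blockUnion, card_biUnion hdisj, card_block]

theorem blockUnion_subset_Icc {m k n : ℕ} (hkn : (k + 1) * (m + 1) ≤ n + 2) :
    blockUnion m k ⊆ Icc 1 n := by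
  intro x hx
  obtain ⟨q, r, hr, rfl⟩ := exists_mul_add_eq m x
  obtain ⟨hq, hr0, hrm⟩ := (mul_add_mem_blockUnion_iff hr).1 hx
  have : (m + 1) * q ≤ (m + 1) * k := Nat.mul_le_mul_left _ hq
  rw [mem_Icc]
  constructor <;> nlinarith

theorem not_hasConsec_blockUnion {m : ℕ} (hm : 1 ≤ m) (k : ℕ) :
    ¬ HasConsec m (blockUnion m k) := by
  rintro ⟨i, hi⟩
  obtain ⟨q, r, hr, rfl⟩ := exists_mul_add_eq m i
  rcases Nat.eq_zero_or_pos r with rfl | hr0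
  · have := (mul_add_mem_blockUnion_iff (Nat.zero_le m)).1 (hi 0 hm)
    omega
  · have := hi (m - r) (by omega)
    rw [add_assoc, Nat.add_sub_cancel' hr, mul_add_mem_blockUnion_iff le_rfl] at this
    omega

theorem hasConsec_insert_blockUnion {m k i : ℕ} (hi : i < (k + 1) * (m + 1))
    (hit : i ∉ blockUnion m k) : HasConsec m (insert i (blockUnion m k)) := by
  obtain ⟨q, r, hr, rfl⟩ := exists_mul_add_eq m i
  have hq : q ≤ k := by
    by_contra! h
    nlinarith
  have hr' : r = 0 ∨ r = m := by
    rw [mul_add_mem_blockUnion_iff hr] at hit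
    omega
  rcases hr' with rfl | hrm
  · refine ⟨(m + 1) * q, fun l hl => ?_⟩
    rcases Nat.eq_zero_or_pos l with rfl | hl0
    · exact mem_insert_self _ _
    · exact mem_insert_of_mem ((mul_add_mem_blockUnion_iff hl.le).2 ⟨hq, hl0, hl⟩)
  · subst r
    refine ⟨(m + 1) * q + 1, fun l hl => ?_⟩
    rw [add_assoc, add_comm 1 l]
    rcases (show l + 1 < m ∨ l + 1 = m by omega) with hl' | hl'
    · exact mem_insert_of_mem ((mul_add_mem_blockUnion_iff hl).2 ⟨hq, by omega, hl'⟩)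
    · rw [hl']
      exact mem_insert_self _ _

theorem mul_sub_one_eq_sub_floor_sub_ceil {n m k : ℕ} (hm : 1 ≤ m)
    (hcase : n + 1 = (k + 1) * (m + 1) ∨ n + 2 = (k + 1) * (m + 1)) :
    (k + 1) * (m - 1) = n + 1 - (n + 1) / (m + 1) - (n + m + 1) / (m + 1) := by
  have e1 : (k + 1 + 1) * (m + 1) = (k + 1) * (m + 1) + (m + 1) := by ring
  have e2 : (k + 1) * (m + 1) = k * (m + 1) + (m + 1) := by ring
  have e3 : (k + 1) * (m + 1) = (k + 1) * (m - 1) + 2 * (k + 1) := by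
    obtain ⟨m, rfl⟩ := Nat.exists_eq_add_of_le' hm
    simp only [Nat.add_sub_cancel]
    ring
  have hup : (n + m + 1) / (m + 1) = k + 1 := Nat.div_eq_of_lt_le (by omega) (by omega)
  rcases hcase with h | h
  · rw [Nat.div_eq_of_lt_le (k := k + 1) (by omega) (by omega), hup]
    omega
  · rw [Nat.div_eq_of_lt_le (k := k) (by omega) (by omega), hup]
    omega

theorem stmt_5_general (n m : ℕ) (hm : 1 ≤ m)
    (k : ℕ)
    (hcase : n = (k + 1) * (m + 1) - 1 ∨ n = (k + 1) * (m + 1) - 2)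
    (τ : Finset ℕ)
    (hτ : τ = (Finset.range (k + 1)).biUnion
      (fun j => Finset.Icc (j * (m + 1) + 1) (j * (m + 1) + m - 1))) :
    τ ⊆ Finset.Icc 1 n ∧
    τ.card = (k + 1) * (m - 1) ∧
    ¬ HasConsec m τ ∧
    (∀ i ∈ Finset.Icc 1 n, i ∉ τ → HasConsec m (insert i τ)) ∧
    τ.card = n + 1 - (n + 1) / (m + 1) - (n + m + 1) / (m + 1) := by
  obtain rfl : τ = blockUnion m k := hτ
  have hN : n + 1 = (k + 1) * (m + 1) ∨ n + 2 = (k + 1) * (m + 1) := by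
    have : 2 ≤ (k + 1) * (m + 1) := by nlinarith
    omega
  refine ⟨blockUnion_subset_Icc (by omega), card_blockUnion m k, not_hasConsec_blockUnion hm k,
    fun i hi hit => hasConsec_insert_blockUnion (by rw [mem_Icc] at hi; omega) hit,
    (card_blockUnion m k).trans (mul_sub_one_eq_sub_floor_sub_ceil hm hN)⟩

/-- Case (a): if `n = (k+1)(m+1)−1` or `n = (k+1)(m+1)−2` where `k = ⌊n/(m+1)⌋`, then
`τ = ⋃_{j=0}^{k} {j(m+1)+1, …, j(m+1)+m−1}` is a subset of `[n]` with
`|τ| = (k+1)(m−1)` containing no `m` consecutive integers, such that `τ ∪ {i}`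
contains `m` consecutive integers for every `i ∈ [n] \ τ`, and
`|τ| = n + 1 − ⌊(n+1)/(m+1)⌋ − ⌈(n+1)/(m+1)⌉`. -/
theorem stmt_5 (n m : ℕ) (hm : 1 ≤ m) (hn : m ≤ n)
    (k : ℕ) (hk : k = n / (m + 1))
    (hcase : n = (k + 1) * (m + 1) - 1 ∨ n = (k + 1) * (m + 1) - 2)
    (τ : Finset ℕ)
    (hτ : τ = (Finset.range (k + 1)).biUnion
      (fun j => Finset.Icc (j * (m + 1) + 1) (j * (m + 1) + m - 1))) :
    τ ⊆ Finset.Icc 1 n ∧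
    τ.card = (k + 1) * (m - 1) ∧
    ¬ HasConsec m τ ∧
    (∀ i ∈ Finset.Icc 1 n, i ∉ τ → HasConsec m (insert i τ)) ∧
    τ.card = n + 1 - (n + 1) / (m + 1) - (n + m + 1) / (m + 1) :=
  stmt_5_general n m hm k hcase τ hτ
end

section
/- Let K be a field and n, m integers with m ≥ 1 and n ≥ 2m. Then the colon ideal (I_{n,m} : x_m) equals the ideal of S generated by the monomials u_i/x_m = ∏_{i ≤ l ≤ i+m−1, l ≠ m} x_l for 1 ≤ i ≤ m, together with the monomials u_i for m+2 ≤ i ≤ n−m+1. (In particular u_{m+1} is omitted, since u_m/x_m divides u_{m+1}.) -/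
open MvPolynomial

/-- The generator `u_i = x_i x_{i+1} ⋯ x_{i+m-1}` of the path ideal, where the
variables of `K[x_1,…,x_n]` are 1-indexed via `x_t = X ⟨t-1⟩`. -/
noncomputable def pathGen (K : Type) [Field K] (n m i : ℕ) : MvPolynomial (Fin n) K :=
  ∏ j ∈ Finset.univ.filter (fun j : Fin n => i ≤ (j : ℕ) + 1 ∧ (j : ℕ) + 1 < i + m),
    X j

/-- The monomial `u_i / x_p = ∏_{i ≤ l ≤ i+m-1, l ≠ p} x_l`. -/
noncomputable def pathGenDiv (K : Type) [Field K] (n m i p : ℕ) : MvPolynomial (Fin n) K :=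
  ∏ j ∈ Finset.univ.filter
      (fun j : Fin n => (i ≤ (j : ℕ) + 1 ∧ (j : ℕ) + 1 < i + m) ∧ (j : ℕ) + 1 ≠ p),
    X j

/-- The path ideal `I_{n,m} = (u_1, …, u_{n-m+1}) ⊆ K[x_1,…,x_n]` of the line graph. -/
noncomputable def pathIdeal (K : Type) [Field K] (n m : ℕ) : Ideal (MvPolynomial (Fin n) K) :=
  Ideal.span {q | ∃ i : ℕ, 1 ≤ i ∧ i ≤ n - m + 1 ∧ q = pathGen K n m i}

/-- The variable `x_t` of `K[x_1,…,x_n]` (1-indexed; junk value `0` out of range). -/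
noncomputable def xv (K : Type) [Field K] (n t : ℕ) : MvPolynomial (Fin n) K :=
  if h : 1 ≤ t ∧ t ≤ n then X (⟨t - 1, by omega⟩ : Fin n) else 0

/-! A squarefree monomial ideal generated by the `x^T = ∏_{j ∈ T} x_j` has colon ideal by a
variable `x_p` generated by the `x^{T \ {p}}`, because `x^T` divides `x^d x_p` iff
`T \ {p} ⊆ supp d`. For the path ideal and `p = m` these generators are `u_i / x_m` for
`i ≤ m`, then `u_{m+1}`, which is a multiple of `u_m / x_m`, and `u_i` for `i ≥ m + 2`, which do
not involve `x_m`. -/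

namespace MvPolynomial

variable {σ R ι : Type*} [CommSemiring R]

lemma prod_X_eq_monomial (T : Finset σ) :
    (∏ j ∈ T, X j : MvPolynomial σ R) = monomial (∑ j ∈ T, Finsupp.single j 1) 1 := by
  rw [monomial_sum_one]
  rfl

lemma sum_single_one_le_iff (T : Finset σ) (d : σ →₀ ℕ) :
    ∑ j ∈ T, Finsupp.single j 1 ≤ d ↔ T ⊆ d.support := by
  classical
  simp only [Finsupp.le_def, Finsupp.finsetSum_apply, Finsupp.single_apply, Finset.sum_ite_eq',
    Finset.subset_iff, Finsupp.mem_support_iff]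
  refine ⟨fun h j hj => ?_, fun h j => ?_⟩
  · have := h j
    rw [if_pos hj] at this
    omega
  · split_ifs with hj
    · exact Nat.one_le_iff_ne_zero.mpr (h hj)
    · exact Nat.zero_le _

theorem mem_span_prod_X_image_iff {T : ι → Finset σ} {S : Set ι} {f : MvPolynomial σ R} :
    f ∈ Ideal.span ((fun i => ∏ j ∈ T i, X j) '' S) ↔
      ∀ d ∈ f.support, ∃ i ∈ S, T i ⊆ d.support := by
  have hT : (fun i => ∏ j ∈ T i, (X j : MvPolynomial σ R)) =
      (fun s => monomial s 1) ∘ fun i => ∑ j ∈ T i, Finsupp.single j 1 :=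
    _root_.funext fun i => prod_X_eq_monomial (T i)
  simp only [hT, Set.image_comp, mem_ideal_span_monomial_image, Set.exists_mem_image,
    sum_single_one_le_iff]

theorem colon_span_X_eq_span_prod_X_erase [DecidableEq σ] (T : ι → Finset σ) (S : Set ι)
    (p : σ) :
    (Ideal.span ((fun i => ∏ j ∈ T i, X j) '' S) : Ideal (MvPolynomial σ R)).colon
        (Ideal.span {X p} : Ideal (MvPolynomial σ R)) =
      Ideal.span ((fun i => ∏ j ∈ (T i).erase p, X j) '' S) := by
  ext f
  rw [Ideal.mem_colon_span_singleton, mem_span_prod_X_image_iff, mem_span_prod_X_image_iff,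
    support_mul_X, Finset.forall_mem_map]
  simp [Finsupp.support_add_eq_union, Finset.subset_insert_iff]

end MvPolynomial

def pathSupport (n m i : ℕ) : Finset (Fin n) :=
  Finset.univ.filter fun j : Fin n => i ≤ (j : ℕ) + 1 ∧ (j : ℕ) + 1 < i + m

section PathIdeal

variable {K : Type} [Field K] {n m : ℕ}

@[simp]
lemma mem_pathSupport {i : ℕ} {j : Fin n} :
    j ∈ pathSupport n m i ↔ i ≤ (j : ℕ) + 1 ∧ (j : ℕ) + 1 < i + m := by
  simp [pathSupport]

lemma pathGen_eq_prod_X (i : ℕ) : pathGen K n m i = ∏ j ∈ pathSupport n m i, X j := rfl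

lemma pathGenDiv_eq_prod_X (i : ℕ) {p : Fin n} {q : ℕ} (hp : (p : ℕ) + 1 = q) :
    pathGenDiv K n m i q = ∏ j ∈ (pathSupport n m i).erase p, X j := by
  unfold pathGenDiv
  congr 1
  ext j
  simp [← hp, Fin.ext_iff, and_comm]

lemma pathIdeal_eq_span_image :
    pathIdeal K n m =
      Ideal.span ((fun i => ∏ j ∈ pathSupport n m i, X j) '' Set.Icc 1 (n - m + 1)) := by
  unfold pathIdeal
  congr 1
  ext q
  simp [pathGen_eq_prod_X, eq_comm, and_assoc]

lemma erase_pathSupport_of_lt {i : ℕ} {p : Fin n} (hp : (p : ℕ) + 1 < i) :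
    (pathSupport n m i).erase p = pathSupport n m i :=
  Finset.erase_eq_of_notMem (by simp only [mem_pathSupport, not_and, not_lt]; omega)

lemma erase_pathSupport_subset_succ {i : ℕ} {p : Fin n} (hp : (p : ℕ) + 1 = i) :
    (pathSupport n m i).erase p ⊆ pathSupport n m (i + 1) := by
  intro j
  simp only [Finset.mem_erase, ne_eq, Fin.ext_iff, mem_pathSupport, and_imp]
  omega

end PathIdeal

/-- For `m ≥ 1` and `n ≥ 2m`, the colon ideal `(I_{n,m} : x_m)` is generated by
`u_i/x_m` for `1 ≤ i ≤ m` together with `u_i` for `m+2 ≤ i ≤ n-m+1`. -/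
theorem stmt_7 (K : Type) [Field K] (n m : ℕ) (hm : 1 ≤ m) (hn : 2 * m ≤ n) :
    (pathIdeal K n m).colon (Ideal.span {xv K n m}) =
      Ideal.span
        ({q | ∃ i : ℕ, 1 ≤ i ∧ i ≤ m ∧ q = pathGenDiv K n m i m} ∪
          {q | ∃ i : ℕ, m + 2 ≤ i ∧ i ≤ n - m + 1 ∧ q = pathGen K n m i}) := by
  set p : Fin n := ⟨m - 1, by omega⟩
  have hp : (p : ℕ) + 1 = m := Nat.sub_add_cancel hm
  have hxv : xv K n m = X p := dif_pos ⟨hm, by omega⟩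
  rw [hxv, pathIdeal_eq_span_image, colon_span_X_eq_span_prod_X_erase]
  apply le_antisymm <;> rw [Ideal.span_le]
  · rintro _ ⟨i, ⟨hi1, hi2⟩, rfl⟩
    rcases lt_trichotomy i (m + 1) with hi | rfl | hi
    · exact Ideal.subset_span (Or.inl ⟨i, hi1, by omega, (pathGenDiv_eq_prod_X i hp).symm⟩)
    · have hdvd : pathGenDiv K n m m m ∣ ∏ j ∈ (pathSupport n m (m + 1)).erase p, X j := by
        rw [pathGenDiv_eq_prod_X m hp, erase_pathSupport_of_lt (i := m + 1) (by omega)]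
        exact Finset.prod_dvd_prod_of_subset _ _ _ (erase_pathSupport_subset_succ hp)
      exact Ideal.mem_of_dvd _ hdvd (Ideal.subset_span (Or.inl ⟨m, hm, le_rfl, rfl⟩))
    · dsimp only
      rw [erase_pathSupport_of_lt (by omega)]
      exact Ideal.subset_span (Or.inr ⟨i, hi, hi2, rfl⟩)
  · rintro _ (⟨i, hi1, hi2, rfl⟩ | ⟨i, hi1, hi2, rfl⟩)
    · rw [pathGenDiv_eq_prod_X i hp]
      exact Ideal.subset_span ⟨i, ⟨hi1, by omega⟩, rfl⟩
    · rw [pathGen_eq_prod_X, ← erase_pathSupport_of_lt (p := p) (by omega)]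
      exact Ideal.subset_span ⟨i, ⟨by omega, hi2⟩, rfl⟩
end
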